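/- Let α and γ be weak compositions of length n and let S ⊆ [n] satisfy |S| = |supp(α)|. Then the following are equivalent: (a) m(γ, S) exists and α ≥ 𝟙_S + m(γ, S) in Bruhat order; (b) M(α, S) exists and the composition obtained from M(α, S) by decreasing each positive entry by 1 is ≥ γ in Bruhat order. -/

import Mathlib

/-- The `j`-th largest element (0-indexed) of a finite set of `Fin n`,
viewed as an element of `[n] = {1,...,n}` via `i ↦ i + 1`; `0` as default. -/
def jthLargestF (n : ℕ) (S : Finset (Fin n)) (j : ℕ) : ℕ :=
  (((Finset.sort S (· ≤ ·)).reverse).map (fun i => (i : ℕ) + 1)).getD j 0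

/-- The `j`-th smallest element (0-indexed), similarly. -/
def jthSmallestF (n : ℕ) (S : Finset (Fin n)) (j : ℕ) : ℕ :=
  ((Finset.sort S (· ≤ ·)).map (fun i => (i : ℕ) + 1)).getD j 0

/-- Order on subsets of `[n]`: equal cardinality and `j`-th largest elements compare. -/
def setLEF (n : ℕ) (S T : Finset (Fin n)) : Prop :=
  S.card = T.card ∧ ∀ j < S.card, jthLargestF n S j ≤ jthLargestF n T j

/-- The `c`-th column of the key tableau of the weak composition `α`: `{i : α i ≥ c}`. -/
def col (n : ℕ) (α : Fin n → ℕ) (c : ℕ) : Finset (Fin n) :=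
  Finset.univ.filter (fun i => c ≤ α i)

/-- The support of a weak composition. -/
def suppC (n : ℕ) (α : Fin n → ℕ) : Finset (Fin n) :=
  Finset.univ.filter (fun i => 0 < α i)

/-- Bruhat order on weak compositions: key tableaux have the same shape and
compare entry-wise, expressed column by column. -/
def bruhatLE (n : ℕ) (γ α : Fin n → ℕ) : Prop :=
  ∀ c : ℕ, 1 ≤ c → setLEF n (col n γ c) (col n α c)

/-- `μ` is the Bruhat-minimum of `{γ : γ ≥ α, supp γ ⊆ S}`. -/
def isBruhatMin (n : ℕ) (α : Fin n → ℕ) (S : Finset (Fin n)) (μ : Fin n → ℕ) : Prop :=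
  bruhatLE n α μ ∧ suppC n μ ⊆ S ∧
    ∀ γ : Fin n → ℕ, bruhatLE n α γ → suppC n γ ⊆ S → bruhatLE n μ γ

/-- `μ` is the Bruhat-maximum of `{γ : γ ≤ α, supp γ ⊆ S}`. -/
def isBruhatMax (n : ℕ) (α : Fin n → ℕ) (S : Finset (Fin n)) (μ : Fin n → ℕ) : Prop :=
  bruhatLE n μ α ∧ suppC n μ ⊆ S ∧
    ∀ γ : Fin n → ℕ, bruhatLE n γ α → suppC n γ ⊆ S → bruhatLE n γ μ

/-- `γ` is obtained from `α` by a single left swap: exchange parts `α i < α j` with `i < j`. -/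
def leftSwapStep (n : ℕ) (γ α : Fin n → ℕ) : Prop :=
  ∃ i j : Fin n, i < j ∧ α i < α j ∧ γ = fun k => α (Equiv.swap i j k)

/-- The left swap order: reflexive-transitive closure of single left swaps. -/
def leftSwapLE (n : ℕ) (γ α : Fin n → ℕ) : Prop :=
  Relation.ReflTransGen (leftSwapStep n) γ α

/-- `B = C ◁ A`: there is a strictly increasing choice `b` of elements of `C`,
`b k` being the smallest element of `C` that is `≥` the `k`-th smallest element
of `A` and exceeds all previously chosen elements, with `B` the set of chosen elements. -/
def isLhd (n : ℕ) (C A B : Finset (Fin n)) : Prop :=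
  ∃ b : Fin A.card → Fin n, StrictMono b ∧ (∀ k, b k ∈ C) ∧
    (∀ k : Fin A.card, jthSmallestF n A k ≤ (b k : ℕ) + 1) ∧
    (∀ k : Fin A.card, ∀ c ∈ C, jthSmallestF n A k ≤ (c : ℕ) + 1 →
      (∀ j : Fin A.card, j < k → b j < c) → b k ≤ c) ∧
    B = Finset.image b Finset.univ

/-- `lhdChain [C₁, ..., C_k] B` means `B = C₁ ◁ (C₂ ◁ (⋯ ◁ C_k))`. -/
def lhdChain (n : ℕ) : List (Finset (Fin n)) → Finset (Fin n) → Prop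
  | [], B => B = ∅
  | [C], B => B = C
  | C :: D :: rest, B => ∃ B', lhdChain n (D :: rest) B' ∧ isLhd n C B' B

/-- `T ∈ RSSYT(α)`: a reverse semistandard Young tableau of shape `α⁺`, encoded by its
columns (strictly decreasing sets, rows weakly decreasing), whose left key is
entry-wise at most `key α`. -/
def memRSSYT (n : ℕ) (α : Fin n → ℕ) (T : ℕ → Finset (Fin n)) : Prop :=
  (∀ c, 1 ≤ c → (T c).card = (col n α c).card) ∧
  (∀ c, 1 ≤ c → ∀ k < (T (c+1)).card, jthLargestF n (T (c+1)) k ≤ jthLargestF n (T c) k) ∧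
  (∀ c, 1 ≤ c → ∃ B, lhdChain n ((List.range c).map (fun i => T (i+1))) B ∧
    setLEF n B (col n α c))

/-- `(L, E) ∈ RSVT(α)`: a reverse set-valued tableau of shape `α⁺` encoded as a diagram
pair by columns: `L c` the leading entries and `E c` the extra entries of column `c`,
with left key (of the leading tableau) entry-wise at most `key α`. -/
def memRSVT (n : ℕ) (α : Fin n → ℕ) (L E : ℕ → Finset (Fin n)) : Prop :=
  (∀ c, 1 ≤ c → Disjoint (L c) (E c)) ∧
  (∀ c, 1 ≤ c → (L c).card = (col n α c).card) ∧
  (∀ c, 1 ≤ c → ∀ k < (L (c+1)).card, jthLargestF n (L (c+1)) k ≤ jthLargestF n (L c) k) ∧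
  (∀ c, 1 ≤ c → ∀ e ∈ E c,
    ((L (c+1)).filter (fun l => e < l)).card < ((L c).filter (fun l => e < l)).card) ∧
  (∀ c, 1 ≤ c → ∃ B, lhdChain n ((List.range c).map (fun i => L (i+1))) B ∧
    setLEF n B (col n α c))

/-- `(L, E)` is a valid reverse set-valued tableau (of some shape), without any
left-key condition. -/
def isValidRSVT (n : ℕ) (L E : ℕ → Finset (Fin n)) : Prop :=
  (∀ c, 1 ≤ c → Disjoint (L c) (E c)) ∧
  (∀ c, 1 ≤ c → (L (c+1)).card ≤ (L c).card) ∧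
  (∃ N, ∀ c, N ≤ c → L c = ∅ ∧ E c = ∅) ∧
  (∀ c, 1 ≤ c → ∀ k < (L (c+1)).card, jthLargestF n (L (c+1)) k ≤ jthLargestF n (L c) k) ∧
  (∀ c, 1 ≤ c → ∀ e ∈ E c,
    ((L (c+1)).filter (fun l => e < l)).card < ((L c).filter (fun l => e < l)).card)

/-- `j`-th largest element of a finite set of naturals (0-indexed), default `0`. -/
def jthLargestN (S : Finset ℕ) (j : ℕ) : ℕ :=
  ((Finset.sort S (· ≤ ·)).reverse).getD j 0

/-- `j`-th smallest element of a finite set of naturals (0-indexed), default `0`. -/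
def jthSmallestN (S : Finset ℕ) (j : ℕ) : ℕ :=
  (Finset.sort S (· ≤ ·)).getD j 0

/-!
Bruhat order compares the columns `col γ c = {i : γ i ≥ c}` in the Gale order, which is
cleanest by counting: `S ≤ T` iff `|S| = |T|` and below every threshold `T` has at most as
many elements as `S`. Both sides of the equivalence then unfold to the same condition: `S` is
Gale below `col α 1`, and for every `c ≥ 1` some subset of `S` lies Gale between `col γ c` and
`col α (c + 1)`. For the converse, the Gale-least subset of `S` above a set `G` is produced
by a greedy scan and only grows with `G`, so the columnwise minima are nested and are the
columns of `m(γ, S)`; `M(α, S)` is the same construction after reversing `[n]`.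
-/

open Finset

theorem Finset.card_filter_lt_orderEmbOfFin {α : Type*} [LinearOrder α] (s : Finset α) {k : ℕ}
    (h : #s = k) (i : Fin k) : #{x ∈ s | x < s.orderEmbOfFin h i} = i := by
  have : {x ∈ s | x < s.orderEmbOfFin h i} = (Iio i).map (s.orderEmbOfFin h).toEmbedding := by
    ext y
    simp only [mem_filter, mem_map, mem_Iio, RelEmbedding.coe_toEmbedding]
    constructor
    · rintro ⟨hy, hlt⟩
      obtain ⟨j, rfl⟩ : y ∈ Set.range (s.orderEmbOfFin h) := by simpa using hy
      exact ⟨j, (s.orderEmbOfFin h).lt_iff_lt.mp hlt, rfl⟩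
    · rintro ⟨j, hj, rfl⟩
      exact ⟨s.orderEmbOfFin_mem h j, (s.orderEmbOfFin h).lt_iff_lt.mpr hj⟩
  rw [this, card_map, Fin.card_Iio]

theorem Finset.card_filter_le_orderEmbOfFin {α : Type*} [LinearOrder α] (s : Finset α) {k : ℕ}
    (h : #s = k) (i : Fin k) : #{x ∈ s | x ≤ s.orderEmbOfFin h i} = i + 1 := by
  rw [← s.card_filter_lt_orderEmbOfFin h i,
    ← card_insert_of_notMem (s := {x ∈ s | x < s.orderEmbOfFin h i})
      fun hi => lt_irrefl _ (mem_filter.mp hi).2]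
  congr 1
  ext y
  simp only [mem_filter, mem_insert, le_iff_lt_or_eq]
  constructor
  · rintro ⟨hy, hlt | rfl⟩
    exacts [Or.inr ⟨hy, hlt⟩, Or.inl rfl]
  · rintro (rfl | ⟨hy, hlt⟩)
    exacts [⟨s.orderEmbOfFin_mem h i, Or.inr rfl⟩, ⟨hy, Or.inl hlt⟩]

variable {n : ℕ}

def countLT (U : Finset (Fin n)) (x : ℕ) : ℕ := #{u ∈ U | u.val < x}

lemma countLT_mono_right (U : Finset (Fin n)) : Monotone (countLT U) := fun _ _ hxy =>
  card_le_card (monotone_filter_right _ fun _ _ h => lt_of_lt_of_le h hxy)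

@[simp] lemma countLT_zero (U : Finset (Fin n)) : countLT U 0 = 0 := by simp [countLT]

lemma countLT_of_le (U : Finset (Fin n)) {x : ℕ} (hx : n ≤ x) : countLT U x = #U := by
  rw [countLT, filter_true_of_mem fun u _ => lt_of_lt_of_le u.isLt hx]

lemma countLT_le_card (U : Finset (Fin n)) (x : ℕ) : countLT U x ≤ #U := card_filter_le _ _

lemma countLT_succ (U : Finset (Fin n)) (x : ℕ) :
    countLT U (x + 1) = countLT U x + #{u ∈ U | u.val = x} := by
  rw [countLT, countLT, ← card_union_of_disjoint (disjoint_filter.mpr fun _ _ h => h.ne),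
    ← filter_or]
  simp only [Nat.lt_succ_iff_lt_or_eq]

lemma card_filter_val_eq_le_one (U : Finset (Fin n)) (x : ℕ) : #{u ∈ U | u.val = x} ≤ 1 :=
  card_le_one.mpr fun _ ha _ hb => Fin.ext ((mem_filter.mp ha).2.trans (mem_filter.mp hb).2.symm)

lemma le_val_orderEmbOfFin_iff (S : Finset (Fin n)) (i : Fin #S) (x : ℕ) :
    x ≤ (S.orderEmbOfFin rfl i : ℕ) ↔ countLT S x ≤ i := by
  constructor
  · intro hx
    rw [← S.card_filter_lt_orderEmbOfFin rfl i]
    exact card_le_card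
      (monotone_filter_right _ fun u _ hu => Fin.lt_def.mpr (lt_of_lt_of_le hu hx))
  · intro hx
    by_contra! hlt
    have : #{u ∈ S | u ≤ S.orderEmbOfFin rfl i} ≤ countLT S x := card_le_card
      (monotone_filter_right S fun u _ hu => lt_of_le_of_lt (Fin.le_def.mp hu) hlt)
    rw [S.card_filter_le_orderEmbOfFin rfl i] at this
    omega

lemma jthLargestF_eq {S : Finset (Fin n)} {j : ℕ} (hj : j < #S) :
    jthLargestF n S j = (S.orderEmbOfFin rfl ⟨#S - 1 - j, by omega⟩ : ℕ) + 1 := by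
  -- the coercion `Fin n → ℕ` inside `jthLargestF` elaborates as a list bind
  simp only [jthLargestF, List.pure_def, List.bind_eq_flatMap, ← List.map_eq_flatMap,
    List.map_map]
  rw [List.getD_eq_getElem _ _ (by simpa using hj), List.getElem_map, List.getElem_reverse,
    orderEmbOfFin_apply]
  simp

lemma lt_jthLargestF_iff {S : Finset (Fin n)} {j : ℕ} (hj : j < #S) (x : ℕ) :
    x < jthLargestF n S j ↔ countLT S x + j < #S := by
  rw [jthLargestF_eq hj, Nat.lt_succ_iff, le_val_orderEmbOfFin_iff, Fin.val_mk]
  omega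

def GaleLE (S T : Finset (Fin n)) : Prop := #S = #T ∧ ∀ x, countLT T x ≤ countLT S x

lemma setLEF_iff_galeLE {S T : Finset (Fin n)} : setLEF n S T ↔ GaleLE S T := by
  refine and_congr_right fun hcard => ⟨fun h x => ?_, fun h j hj => ?_⟩
  · by_contra! hlt
    have hk := countLT_le_card T x
    have hj : #S - 1 - countLT S x < #S := by omega
    have := (lt_jthLargestF_iff (S := T) (hcard ▸ hj) x).mp
      (lt_of_lt_of_le ((lt_jthLargestF_iff hj x).mpr (by omega)) (h _ hj))
    omega
  · have hpos : 0 < jthLargestF n S j := by rw [jthLargestF_eq hj]; omega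
    have hS := (lt_jthLargestF_iff hj (jthLargestF n S j - 1)).mp (by omega)
    have hT := (lt_jthLargestF_iff (S := T) (hcard ▸ hj) (jthLargestF n S j - 1)).mpr
      (by have := h (jthLargestF n S j - 1); omega)
    omega

lemma GaleLE.trans {S T U : Finset (Fin n)} (h₁ : GaleLE S T) (h₂ : GaleLE T U) : GaleLE S U :=
  ⟨h₁.1.trans h₂.1, fun x => (h₂.2 x).trans (h₁.2 x)⟩

/-- The greedy scan of `0, 1, …, n - 1` that admits `x ∈ S` exactly when fewer elements have
been admitted so far than `G` has elements `≤ x`; `galeMinCount S G x` counts the admitted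
elements `< x`. -/
def galeMinCount (S G : Finset (Fin n)) : ℕ → ℕ
  | 0 => 0
  | x + 1 => galeMinCount S G x +
      if galeMinCount S G x < countLT G (x + 1) then #{i ∈ S | i.val = x} else 0

def galeMin (S G : Finset (Fin n)) : Finset (Fin n) :=
  {i ∈ S | galeMinCount S G i < countLT G (i + 1)}

section galeMin

variable (S G : Finset (Fin n))

lemma galeMin_subset : galeMin S G ⊆ S := filter_subset _ _

lemma galeMin_empty : galeMin S ∅ = ∅ := by simp [galeMin, countLT]

lemma galeMinCount_le_countLT (x : ℕ) : galeMinCount S G x ≤ countLT G x := by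
  induction x with
  | zero => simp [galeMinCount]
  | succ x ih =>
    have := card_filter_val_eq_le_one S x
    have := countLT_mono_right G (Nat.le_add_right x 1)
    simp only [galeMinCount]
    split_ifs <;> omega

lemma countLT_galeMin (x : ℕ) : countLT (galeMin S G) x = galeMinCount S G x := by
  induction x with
  | zero => simp [galeMinCount]
  | succ x ih =>
    rw [countLT_succ, ih, galeMinCount, galeMin, filter_filter]
    congr 1
    split_ifs with h
    · congr 1
      exact filter_congr fun i _ => ⟨And.right, fun hi => ⟨hi ▸ h, hi⟩⟩
    · exact card_eq_zero.mpr (filter_false_of_mem fun i _ hi => h (hi.2 ▸ hi.1))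

variable {S G}

lemma countLT_le_galeMinCount {U : Finset (Fin n)} (hUS : U ⊆ S)
    (hUG : ∀ x, countLT U x ≤ countLT G x) (x : ℕ) : countLT U x ≤ galeMinCount S G x := by
  induction x with
  | zero => simp
  | succ x ih =>
    have hx := hUG (x + 1)
    have := card_le_card (filter_subset_filter (fun u : Fin n => u.val = x) hUS)
    rw [countLT_succ] at hx ⊢
    simp only [galeMinCount]
    split_ifs <;> omega

lemma galeMinCount_add_countLT_le {G' : Finset (Fin n)} (hG : G' ⊆ G) (x : ℕ) :
    galeMinCount S G x + countLT G' x ≤ galeMinCount S G' x + countLT G x := by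
  induction x with
  | zero => simp [galeMinCount]
  | succ x ih =>
    have := card_filter_val_eq_le_one S x
    have := card_le_card (filter_subset_filter (fun u : Fin n => u.val = x) hG)
    simp only [galeMinCount, countLT_succ G, countLT_succ G']
    split_ifs <;> omega

lemma galeMin_mono {G' : Finset (Fin n)} (hG : G' ⊆ G) : galeMin S G' ⊆ galeMin S G := by
  intro i hi
  simp only [galeMin, mem_filter] at hi ⊢
  have := galeMinCount_add_countLT_le (S := S) hG i
  have := card_le_card (filter_subset_filter (fun u : Fin n => u.val = i) hG)
  have := countLT_succ G i
  have := countLT_succ G' i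
  exact ⟨hi.1, by omega⟩

variable {V : Finset (Fin n)}

lemma card_galeMin (hVS : V ⊆ S) (hGV : GaleLE G V) : #(galeMin S G) = #G := by
  have h₁ := countLT_le_galeMinCount hVS hGV.2 n
  have h₂ := galeMinCount_le_countLT S G n
  rw [countLT_of_le _ le_rfl] at h₁ h₂
  rw [← countLT_of_le (galeMin S G) le_rfl, countLT_galeMin]
  have := hGV.1
  omega

lemma galeLE_galeMin (hVS : V ⊆ S) (hGV : GaleLE G V) : GaleLE G (galeMin S G) :=
  ⟨(card_galeMin hVS hGV).symm, fun x => (countLT_galeMin S G x).trans_le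
    (galeMinCount_le_countLT S G x)⟩

lemma galeMin_galeLE (hVS : V ⊆ S) (hGV : GaleLE G V) : GaleLE (galeMin S G) V :=
  ⟨(card_galeMin hVS hGV).trans hGV.1, fun x => (countLT_le_galeMinCount hVS hGV.2 x).trans_eq
    (countLT_galeMin S G x).symm⟩

lemma GaleLE.exists_subset_of_subset_left {G' U : Finset (Fin n)} (hGU : GaleLE G U)
    (hG : G' ⊆ G) : ∃ V ⊆ U, GaleLE G' V := by
  refine ⟨galeMin U G', galeMin_subset U G', ?_, fun x => ?_⟩
  · have h₁ := galeMinCount_add_countLT_le (S := U) hG n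
    have h₂ := countLT_le_galeMinCount subset_rfl hGU.2 n
    have h₃ := galeMinCount_le_countLT U G' n
    simp only [countLT_of_le _ le_rfl] at h₁ h₂ h₃
    rw [← countLT_of_le (galeMin U G') le_rfl, countLT_galeMin]
    have := hGU.1
    omega
  · rw [countLT_galeMin]
    exact galeMinCount_le_countLT U G' x

end galeMin

lemma image_rev_image_rev (U : Finset (Fin n)) : (U.image Fin.rev).image Fin.rev = U := by
  simp [image_image, Function.comp_def]

lemma card_image_rev (U : Finset (Fin n)) : #(U.image Fin.rev) = #U :=
  card_image_of_injective _ Fin.rev_injective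

lemma countLT_image_rev (U : Finset (Fin n)) (x : ℕ) :
    countLT (U.image Fin.rev) x = #U - countLT U (n - x) := by
  have := card_filter_add_card_filter_not (s := U) (fun u : Fin n => u.val < n - x)
  have hrev : {u ∈ U | (Fin.rev u).val < x} = {u ∈ U | ¬ u.val < n - x} :=
    filter_congr fun u _ => by rw [Fin.val_rev]; omega
  rw [countLT, filter_image, card_image_of_injective _ Fin.rev_injective, hrev, countLT]
  omega

lemma galeLE_image_rev_iff {S T : Finset (Fin n)} :
    GaleLE (T.image Fin.rev) (S.image Fin.rev) ↔ GaleLE S T := by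
  simp only [GaleLE, card_image_rev, countLT_image_rev, eq_comm (a := #T)]
  refine and_congr_right fun hcard => ⟨fun h x => ?_, fun h x => ?_⟩
  · rcases le_total x n with hx | hx
    · have := h (n - x)
      have := countLT_le_card S x
      have := countLT_le_card T x
      rw [Nat.sub_sub_self hx] at *
      omega
    · rw [countLT_of_le _ hx, countLT_of_le _ hx, hcard]
  · have := h (n - x)
    have := countLT_le_card S (n - x)
    omega

def galeMax (S A : Finset (Fin n)) : Finset (Fin n) :=
  (galeMin (S.image Fin.rev) (A.image Fin.rev)).image Fin.rev

section galeMax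

variable {S A V : Finset (Fin n)}

lemma galeMax_subset : galeMax S A ⊆ S := by
  conv_rhs => rw [← image_rev_image_rev S]
  exact image_subset_image (galeMin_subset _ _)

lemma galeMax_empty : galeMax S ∅ = ∅ := by simp [galeMax, galeMin_empty]

lemma galeMax_mono {A' : Finset (Fin n)} (hA : A' ⊆ A) : galeMax S A' ⊆ galeMax S A :=
  image_subset_image (galeMin_mono (image_subset_image hA))

lemma galeMax_galeLE (hVS : V ⊆ S) (hVA : GaleLE V A) : GaleLE (galeMax S A) A := by
  rw [← galeLE_image_rev_iff, galeMax, image_rev_image_rev]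
  exact galeLE_galeMin (image_subset_image hVS) (galeLE_image_rev_iff.mpr hVA)

lemma galeLE_galeMax (hVS : V ⊆ S) (hVA : GaleLE V A) : GaleLE V (galeMax S A) := by
  rw [← galeLE_image_rev_iff, galeMax, image_rev_image_rev]
  exact galeMin_galeLE (image_subset_image hVS) (galeLE_image_rev_iff.mpr hVA)

lemma GaleLE.exists_subset_of_subset_right {A' U : Finset (Fin n)} (hUA : GaleLE U A)
    (hA : A' ⊆ A) : ∃ V ⊆ U, GaleLE V A' := by
  obtain ⟨V, hVU, hV⟩ := (galeLE_image_rev_iff.mpr hUA).exists_subset_of_subset_left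
    (image_subset_image hA)
  refine ⟨V.image Fin.rev, ?_, ?_⟩
  · rw [← image_rev_image_rev U]
    exact image_subset_image hVU
  · rwa [← galeLE_image_rev_iff, image_rev_image_rev]

end galeMax

@[simp] lemma mem_col {δ : Fin n → ℕ} {c : ℕ} {i : Fin n} :
    i ∈ col n δ c ↔ c ≤ δ i := by
  simp [col]

lemma col_antitone (δ : Fin n → ℕ) : Antitone (col n δ) := fun _ _ h _ hi =>
  mem_col.mpr (h.trans (mem_col.mp hi))

lemma suppC_eq_col_one (δ : Fin n → ℕ) : suppC n δ = col n δ 1 := by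
  ext i
  simp [suppC, Nat.one_le_iff_ne_zero, Nat.pos_iff_ne_zero]

lemma col_sup_add_one (δ : Fin n → ℕ) : col n δ (univ.sup δ + 1) = ∅ :=
  eq_empty_of_forall_notMem fun i hi =>
    (mem_col.mp hi).not_gt (Nat.lt_succ_of_le (le_sup (mem_univ i)))

lemma col_subset_suppC (δ : Fin n → ℕ) {c : ℕ} (hc : 1 ≤ c) : col n δ c ⊆ suppC n δ :=
  suppC_eq_col_one δ ▸ col_antitone δ hc

section Indicator

variable {S : Finset (Fin n)} {μ : Fin n → ℕ}

lemma col_indicator_add_one (hμ : suppC n μ ⊆ S) :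
    col n (fun i => (if i ∈ S then 1 else 0) + μ i) 1 = S := by
  ext i
  have : 0 < μ i → i ∈ S := fun h => hμ (by simpa [suppC] using h)
  by_cases hi : i ∈ S <;> simp [hi] at this ⊢
  omega

lemma col_indicator_add_succ (hμ : suppC n μ ⊆ S) {c : ℕ} (hc : 1 ≤ c) :
    col n (fun i => (if i ∈ S then 1 else 0) + μ i) (c + 1) = col n μ c := by
  ext i
  have : 0 < μ i → i ∈ S := fun h => hμ (by simpa [suppC] using h)
  by_cases hi : i ∈ S <;> simp [hi] at this ⊢ <;> omega

end Indicator

lemma col_sub_one (ν : Fin n → ℕ) {c : ℕ} (hc : 1 ≤ c) :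
    col n (fun i => ν i - 1) c = col n ν (c + 1) := by
  ext i
  simp only [mem_col]
  omega

lemma exists_col_eq {N : ℕ → Finset (Fin n)} (hN : Antitone N) {B : ℕ} (hB : N B = ∅) :
    ∃ δ : Fin n → ℕ, ∀ c, 1 ≤ c → col n δ c = N c := by
  refine ⟨fun i => Nat.findGreatest (fun c => i ∈ N c) B, fun c hc => ?_⟩
  ext i
  rw [mem_col]
  constructor
  · intro h
    exact hN h (Nat.findGreatest_of_ne_zero (P := fun c => i ∈ N c) (n := B) rfl (by omega))
  · intro hi
    refine Nat.le_findGreatest (not_lt.mp fun hBc => ?_) hi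
    simpa [hB] using hN hBc.le hi

lemma bruhatLE_iff {γ α : Fin n → ℕ} :
    bruhatLE n γ α ↔ ∀ c, 1 ≤ c → GaleLE (col n γ c) (col n α c) :=
  forall₂_congr fun _ _ => setLEF_iff_galeLE

section Sandwich

variable {α γ : Fin n → ℕ} {S : Finset (Fin n)}

def GaleSandwich (α γ : Fin n → ℕ) (S : Finset (Fin n)) : Prop :=
  GaleLE S (col n α 1) ∧
    ∀ c, 1 ≤ c → ∃ U ⊆ S, GaleLE (col n γ c) U ∧ GaleLE U (col n α (c + 1))

lemma galeSandwich_of_isBruhatMin {μ : Fin n → ℕ} (hμ : isBruhatMin n γ S μ)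
    (hle : bruhatLE n (fun i => (if i ∈ S then 1 else 0) + μ i) α) : GaleSandwich α γ S := by
  obtain ⟨hγμ, hμS, -⟩ := hμ
  rw [bruhatLE_iff] at hle hγμ
  refine ⟨col_indicator_add_one hμS ▸ hle 1 le_rfl, fun c hc =>
    ⟨col n μ c, (col_subset_suppC μ hc).trans hμS, hγμ c hc, ?_⟩⟩
  simpa only [col_indicator_add_succ hμS hc] using hle (c + 1) (by omega)

lemma galeSandwich_of_isBruhatMax (hS : #S = #(suppC n α)) {ν : Fin n → ℕ}
    (hν : isBruhatMax n α S ν) (hγ : bruhatLE n γ (fun i => ν i - 1)) :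
    GaleSandwich α γ S := by
  obtain ⟨hνα, hνS, -⟩ := hν
  rw [bruhatLE_iff] at hνα hγ
  rw [suppC_eq_col_one] at hνS hS
  have hcol : col n ν 1 = S := eq_of_subset_of_card_le hνS (by rw [hS, (hνα 1 le_rfl).1])
  refine ⟨hcol ▸ hνα 1 le_rfl, fun c hc =>
    ⟨col n ν (c + 1), hcol ▸ col_antitone ν (by omega), col_sub_one ν hc ▸ hγ c hc,
      hνα (c + 1) (by omega)⟩⟩

lemma GaleSandwich.exists_isBruhatMin (h : GaleSandwich α γ S) : ∃ μ : Fin n → ℕ,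
    isBruhatMin n γ S μ ∧ bruhatLE n (fun i => (if i ∈ S then 1 else 0) + μ i) α := by
  obtain ⟨μ, hμ⟩ := exists_col_eq (N := fun c => galeMin S (col n γ c))
    (fun _ _ hcd => galeMin_mono (col_antitone γ hcd)) (B := univ.sup γ + 1)
    (by rw [col_sup_add_one, galeMin_empty])
  have hsupp : suppC n μ ⊆ S := by
    rw [suppC_eq_col_one, hμ 1 le_rfl]
    exact galeMin_subset _ _
  refine ⟨μ, ⟨?_, hsupp, fun δ hγδ hδS => ?_⟩, ?_⟩
  · rw [bruhatLE_iff]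
    intro c hc
    obtain ⟨U, hUS, hγU, -⟩ := h.2 c hc
    rw [hμ c hc]
    exact galeLE_galeMin hUS hγU
  · rw [bruhatLE_iff] at hγδ ⊢
    intro c hc
    rw [hμ c hc]
    exact galeMin_galeLE ((col_subset_suppC δ hc).trans hδS) (hγδ c hc)
  · rw [bruhatLE_iff]
    rintro (_ | _ | c) hc
    · omega
    · rw [col_indicator_add_one hsupp]
      exact h.1
    · obtain ⟨U, hUS, hγU, hUα⟩ := h.2 (c + 1) (by omega)
      rw [col_indicator_add_succ hsupp (by omega), hμ _ (by omega)]
      exact (galeMin_galeLE hUS hγU).trans hUα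

lemma GaleSandwich.exists_isBruhatMax (h : GaleSandwich α γ S) : ∃ ν : Fin n → ℕ,
    isBruhatMax n α S ν ∧ bruhatLE n γ (fun i => ν i - 1) := by
  obtain ⟨ν, hν⟩ := exists_col_eq (N := fun c => galeMax S (col n α c))
    (fun _ _ hcd => galeMax_mono (col_antitone α hcd)) (B := univ.sup α + 1)
    (by rw [col_sup_add_one, galeMax_empty])
  refine ⟨ν, ⟨?_, ?_, fun δ hδα hδS => ?_⟩, ?_⟩
  · rw [bruhatLE_iff]
    intro c hc
    obtain ⟨V, hVS, hV⟩ := h.1.exists_subset_of_subset_right (col_antitone α hc)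
    rw [hν c hc]
    exact galeMax_galeLE hVS hV
  · rw [suppC_eq_col_one, hν 1 le_rfl]
    exact galeMax_subset
  · rw [bruhatLE_iff] at hδα ⊢
    intro c hc
    rw [hν c hc]
    exact galeLE_galeMax ((col_subset_suppC δ hc).trans hδS) (hδα c hc)
  · rw [bruhatLE_iff]
    intro c hc
    obtain ⟨U, hUS, hγU, hUα⟩ := h.2 c hc
    rw [col_sub_one ν hc, hν _ (by omega)]
    exact hγU.trans (galeLE_galeMax hUS hUα)

end Sandwich

/-- for `|S| = |supp α|`: `m(γ,S)` exists with `α ≥ 𝟙_S + m(γ,S)` iff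
`M(α,S)` exists with `M(α,S)‾ ≥ γ` (bar = decrease positive entries by 1). -/
theorem stmt5 (n : ℕ) (α γ : Fin n → ℕ) (S : Finset (Fin n))
    (hS : S.card = (suppC n α).card) :
    (∃ μ : Fin n → ℕ, isBruhatMin n γ S μ ∧
      bruhatLE n (fun i => (if i ∈ S then 1 else 0) + μ i) α) ↔
    (∃ μ : Fin n → ℕ, isBruhatMax n α S μ ∧
      bruhatLE n γ (fun i => μ i - 1)) :=
  ⟨fun ⟨_, hμ, hle⟩ => (galeSandwich_of_isBruhatMin hμ hle).exists_isBruhatMax,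
    fun ⟨_, hν, hγ⟩ => (galeSandwich_of_isBruhatMax hS hν hγ).exists_isBruhatMin⟩
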